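/- For every integer n ≥ 1, the equality of ideals ∏_{i=1}^{n} J̃_{0i} = ⋂_{0 ≤ r < s ≤ n} J̃_{rs} holds in the quotient ring T_n/J^{(2)}_{0n}. -/

import Mathlib

open scoped TensorProduct
open PiTensorProduct

noncomputable section

variable (R B : Type*) [CommRing R] [CommRing B] [Algebra R B]

/-- The `(n+1)`-fold tensor power `B ⊗_R ⋯ ⊗_R B`, with factors indexed by `Fin (n+1)`. -/
abbrev TT (n : ℕ) : Type _ := ⨂[R] _ : Fin (n + 1), B

/-- `d^{r,s} b = (1 ⊗ ⋯ ⊗ b ⊗ ⋯ ⊗ 1) - (1 ⊗ ⋯ ⊗ b ⊗ ⋯ ⊗ 1)`, with `b` in position `s`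
(resp. `r`) in the two elementary tensors. -/
def dd (n : ℕ) (r s : Fin (n + 1)) (b : B) : TT R B n :=
  tprod R (fun i => if i = s then b else 1) - tprod R (fun i => if i = r then b else 1)

/-- The ideal `J_{rs}` generated by the elements `d^{r,s} b`. -/
def Jrs (n : ℕ) (r s : Fin (n + 1)) : Ideal (TT R B n) :=
  Ideal.span {x | ∃ b : B, x = dd R B n r s b}

/-- The ideal `J^{(2)}_{0n} = Σ_{0 ≤ r < s ≤ n} J_{rs}²`. -/
def Jsq (n : ℕ) : Ideal (TT R B n) :=
  ⨆ (r : Fin (n + 1)) (s : Fin (n + 1)) (_ : r < s), (Jrs R B n r s) ^ 2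

/-- The image `J̃_{rs}` of the ideal `J_{rs}` in the quotient ring `T_n / J^{(2)}_{0n}`. -/
def Jt (n : ℕ) (r s : Fin (n + 1)) : Ideal (TT R B n ⧸ Jsq R B n) :=
  (Jrs R B n r s).map (Ideal.Quotient.mk (Jsq R B n))

/-- slide move: collapse slot `i` into slot `0`. -/
def mv (n : ℕ) (i : Fin (n + 1)) (f : Fin (n + 1) → B) : Fin (n + 1) → B :=
  fun j => if j = i then 1 else if j = 0 then f 0 * f i else f j

lemma mv_update_i (n : ℕ) [DecidableEq (Fin (n+1))] (i : Fin (n + 1)) (hi : i ≠ 0) (f : Fin (n + 1) → B) (x : B) :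
    mv B n i (Function.update f i x) = Function.update (mv B n i f) 0 (f 0 * x) := by
  funext k
  rcases eq_or_ne k i with rfl | hk
  · simp [mv, Function.update, hi]
  · rcases eq_or_ne k 0 with rfl | hk0
    · simp [mv, Function.update, hi.symm, hk]
    · simp [mv, Function.update, hk, hk0]

lemma mv_update_0 (n : ℕ) [DecidableEq (Fin (n+1))] (i : Fin (n + 1)) (hi : i ≠ 0) (f : Fin (n + 1) → B) (x : B) :
    mv B n i (Function.update f 0 x) = Function.update (mv B n i f) 0 (x * f i) := by
  funext k
  rcases eq_or_ne k i with rfl | hk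
  · simp [mv, Function.update, hi]
  · rcases eq_or_ne k 0 with rfl | hk0
    · simp [mv, Function.update, hi.symm, hk, Ne.symm hk]
    · simp [mv, Function.update, hk, hk0]

lemma mv_update_ne (n : ℕ) [DecidableEq (Fin (n+1))] (i : Fin (n + 1)) (f : Fin (n + 1) → B) (j : Fin (n + 1))
    (hj : j ≠ i) (hj0 : j ≠ 0) (x : B) :
    mv B n i (Function.update f j x) = Function.update (mv B n i f) j x := by
  funext k
  rcases eq_or_ne k j with rfl | hk
  · simp [mv, Function.update, hj, hj0]
  · rcases eq_or_ne k i with rfl | hki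
    · simp [mv, Function.update, hk]
    · rcases eq_or_ne k 0 with rfl | hk0
      · simp [mv, Function.update, hki, Ne.symm hj0, Ne.symm hj]
      · simp [mv, Function.update, hk, hki, hk0]

/-- The multilinear map underlying φᵢ. -/
def mmap (n : ℕ) (i : Fin (n + 1)) (hi : i ≠ 0) :
    MultilinearMap R (fun _ : Fin (n + 1) => B) (TT R B n) where
  toFun f := tprod R (mv B n i f)
  map_update_add' f j x y := by
    rcases eq_or_ne j i with rfl | hj
    · rw [mv_update_i B n j hi, mv_update_i B n j hi, mv_update_i B n j hi, mul_add]
      exact MultilinearMap.map_update_add _ _ _ _ _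
    · rcases eq_or_ne j 0 with rfl | hj0
      · rw [mv_update_0 B n i hi, mv_update_0 B n i hi, mv_update_0 B n i hi, add_mul]
        exact MultilinearMap.map_update_add _ _ _ _ _
      · rw [mv_update_ne B n i f j hj hj0, mv_update_ne B n i f j hj hj0,
          mv_update_ne B n i f j hj hj0]
        exact MultilinearMap.map_update_add _ _ _ _ _
  map_update_smul' f j c x := by
    rcases eq_or_ne j i with rfl | hj
    · rw [mv_update_i B n j hi, mv_update_i B n j hi, mul_smul_comm]
      exact MultilinearMap.map_update_smul _ _ _ _ _
    · rcases eq_or_ne j 0 with rfl | hj0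
      · rw [mv_update_0 B n i hi, mv_update_0 B n i hi, smul_mul_assoc]
        exact MultilinearMap.map_update_smul _ _ _ _ _
      · rw [mv_update_ne B n i f j hj hj0, mv_update_ne B n i f j hj hj0]
        exact MultilinearMap.map_update_smul _ _ _ _ _

lemma mv_mul (n : ℕ) (i : Fin (n + 1)) (f g : Fin (n + 1) → B) :
    mv B n i (f * g) = mv B n i f * mv B n i g := by
  funext k
  rcases eq_or_ne k i with rfl | hk
  · simp [mv]
  · rcases eq_or_ne k 0 with rfl | hk0
    · simp only [mv, if_neg hk, if_pos rfl, Pi.mul_apply]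
      by_cases h : (0 : Fin (n+1)) = i <;> simp [h] <;> ring
    · simp [mv, hk, hk0]

def phi (n : ℕ) (i : Fin (n + 1)) (hi : i ≠ 0) : TT R B n →ₐ[R] TT R B n :=
  liftAlgHom (mmap R B n i hi)
    (by show tprod R (mv B n i 1) = 1
        have : mv B n i 1 = 1 := by funext k; simp [mv]
        rw [this]; rfl)
    (fun x y => by
      show tprod R (mv B n i (x * y)) = tprod R (mv B n i x) * tprod R (mv B n i y)
      rw [tprod_mul_tprod, mv_mul])

lemma phi_tprod (n : ℕ) (i : Fin (n + 1)) (hi : i ≠ 0) (f : Fin (n + 1) → B) :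
    phi R B n i hi (tprod R f) = tprod R (mv B n i f) := by
  simp [phi, liftAlgHom]
  rfl

lemma mv_ee (n : ℕ) (i : Fin (n + 1)) (hi : i ≠ 0) (s : Fin (n + 1)) (b : B) :
    mv B n i (fun k => if k = s then b else 1)
      = fun k => if k = (if s = i then 0 else s) then b else 1 := by
  funext k
  rcases eq_or_ne s i with rfl | h1
  · simp only [if_pos rfl, mv]
    rcases eq_or_ne k s with rfl | h2
    · simp [hi]
    · rcases eq_or_ne k 0 with rfl | h3
      · simp [hi, Ne.symm hi]
      · simp [h2, h3]
  · rcases eq_or_ne k i with rfl | h2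
    · simp [mv, Ne.symm h1, h1, hi]
    · rcases eq_or_ne k 0 with rfl | h3
      · simp [mv, h2, h1, Ne.symm h1]
      · simp [mv, h2, h3, h1]

lemma phi_dd (n : ℕ) (i : Fin (n + 1)) (hi : i ≠ 0) (r s : Fin (n + 1)) (b : B) :
    phi R B n i hi (dd R B n r s b)
      = dd R B n (if r = i then 0 else r) (if s = i then 0 else s) b := by
  simp only [dd, map_sub, phi_tprod, mv_ee B n i hi]


lemma dd_mul_tprod (n : ℕ) (i : Fin (n + 1)) (hi : i ≠ 0) (f : Fin (n + 1) → B) :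
    tprod R f - tprod R (mv B n i f)
      = dd R B n 0 i (f i) * tprod R (Function.update f i 1) := by
  rw [dd, sub_mul, tprod_mul_tprod, tprod_mul_tprod]
  congr 1
  · congr 1
    funext k
    rcases eq_or_ne k i with rfl | hk
    · simp [Function.update]
    · simp [Function.update, hk]
  · congr 1
    funext k
    rcases eq_or_ne k i with rfl | hk
    · simp [Function.update, mv, hi]
    · rcases eq_or_ne k 0 with rfl | hk0
      · simp [Function.update, mv, hk, Ne.symm hi, mul_comm]
      · simp [Function.update, mv, hk, hk0]

lemma phi_sub_mem (n : ℕ) (i : Fin (n + 1)) (hi : i ≠ 0) (a : TT R B n) :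
    a - phi R B n i hi a ∈ Jrs R B n 0 i := by
  induction a using PiTensorProduct.induction_on with
  | smul_tprod r f =>
    rw [map_smul]
    rw [← smul_sub, phi_tprod, dd_mul_tprod R B n i hi f]
    exact Submodule.smul_of_tower_mem _ r
      (Ideal.mul_mem_right _ _ (Ideal.subset_span ⟨f i, rfl⟩))
  | add x y hx hy =>
    rw [map_add]
    have : x + y - (phi R B n i hi x + phi R B n i hi y)
        = (x - phi R B n i hi x) + (y - phi R B n i hi y) := by ring
    rw [this]
    exact Ideal.add_mem _ hx hy

lemma Jrs_symm (n : ℕ) (r s : Fin (n + 1)) : Jrs R B n r s = Jrs R B n s r := by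
  have key : ∀ p q : Fin (n + 1), Jrs R B n p q ≤ Jrs R B n q p := by
    intro p q
    rw [Jrs, Ideal.span_le]
    rintro x ⟨b, rfl⟩
    have : dd R B n p q b = -dd R B n q p b := by rw [dd, dd]; ring
    rw [this]
    exact neg_mem (Ideal.subset_span ⟨b, rfl⟩)
  exact le_antisymm (key r s) (key s r)

lemma Jrs_diag (n : ℕ) (r : Fin (n + 1)) : Jrs R B n r r = ⊥ := by
  refine le_antisymm ?_ bot_le
  rw [Jrs, Ideal.span_le]
  rintro x ⟨b, rfl⟩
  simp [dd]

lemma Jrs_sq_le (n : ℕ) (r s : Fin (n + 1)) : (Jrs R B n r s) ^ 2 ≤ Jsq R B n := by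
  rcases lt_trichotomy r s with h | h | h
  · exact le_iSup_of_le r (le_iSup_of_le s (le_iSup_of_le h le_rfl))
  · subst h
    rw [Jrs_diag]
    exact le_trans (Ideal.pow_le_self two_ne_zero) bot_le
  · rw [Jrs_symm]
    exact le_iSup_of_le s (le_iSup_of_le r (le_iSup_of_le h le_rfl))

lemma phi_map_Jrs (n : ℕ) (i : Fin (n + 1)) (hi : i ≠ 0) (r s : Fin (n + 1)) :
    Ideal.map (phi R B n i hi).toRingHom (Jrs R B n r s)
      ≤ Jrs R B n (if r = i then 0 else r) (if s = i then 0 else s) := by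
  rw [Jrs, Ideal.map_span, Ideal.span_le]
  rintro x ⟨y, ⟨b, rfl⟩, rfl⟩
  exact Ideal.subset_span ⟨b, (phi_dd R B n i hi r s b : _)⟩

lemma phi_map_Jsq (n : ℕ) (i : Fin (n + 1)) (hi : i ≠ 0) :
    Jsq R B n ≤ Ideal.comap (phi R B n i hi).toRingHom (Jsq R B n) := by
  refine iSup_le fun r => iSup_le fun s => iSup_le fun hrs => ?_
  rw [← Ideal.map_le_iff_le_comap, Ideal.map_pow]
  calc (Ideal.map (phi R B n i hi).toRingHom (Jrs R B n r s)) ^ 2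
      ≤ (Jrs R B n (if r = i then 0 else r) (if s = i then 0 else s)) ^ 2 :=
        Ideal.pow_right_mono (phi_map_Jrs R B n i hi r s) 2
    _ ≤ Jsq R B n := Jrs_sq_le R B n _ _

/-- φᵢ descends to the quotient. -/
def phit (n : ℕ) (i : Fin (n + 1)) (hi : i ≠ 0) :
    (TT R B n ⧸ Jsq R B n) →+* (TT R B n ⧸ Jsq R B n) :=
  Ideal.Quotient.lift (Jsq R B n)
    ((Ideal.Quotient.mk (Jsq R B n)).comp (phi R B n i hi).toRingHom)
    (fun a ha => by
      rw [RingHom.comp_apply, Ideal.Quotient.eq_zero_iff_mem]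
      exact phi_map_Jsq R B n i hi ha)

lemma phit_mk (n : ℕ) (i : Fin (n + 1)) (hi : i ≠ 0) (a : TT R B n) :
    phit R B n i hi (Ideal.Quotient.mk (Jsq R B n) a)
      = Ideal.Quotient.mk (Jsq R B n) (phi R B n i hi a) :=
  Ideal.Quotient.lift_mk _ _ _

lemma phit_sub_mem (n : ℕ) (i : Fin (n + 1)) (hi : i ≠ 0) (a : TT R B n ⧸ Jsq R B n) :
    a - phit R B n i hi a ∈ Jt R B n 0 i := by
  obtain ⟨y, rfl⟩ := Ideal.Quotient.mk_surjective a
  rw [phit_mk, ← map_sub]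
  exact Ideal.mem_map_of_mem _ (phi_sub_mem R B n i hi y)

lemma phit_kills (n : ℕ) (i : Fin (n + 1)) (hi : i ≠ 0) (x : TT R B n ⧸ Jsq R B n)
    (hx : x ∈ Jt R B n 0 i) : phit R B n i hi x = 0 := by
  rw [Jt] at hx
  obtain ⟨y, hy, rfl⟩ := Ideal.mem_map_iff_of_surjective _ Ideal.Quotient.mk_surjective |>.mp hx
  rw [phit_mk]
  have : phi R B n i hi y = 0 := by
    have h1 : phi R B n i hi y ∈ Ideal.map (phi R B n i hi).toRingHom (Jrs R B n 0 i) :=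
      Ideal.mem_map_of_mem _ hy
    have h2 := phi_map_Jrs R B n i hi 0 i
    rw [if_neg (Ne.symm hi), if_pos rfl, Jrs_diag] at h2
    simpa using h2 h1
  rw [this, map_zero]


section FixLemmas

variable {A : Type*} [CommRing A]

lemma span_fix (f : A →+* A) (I : Ideal A) (hI : ∀ a, a - f a ∈ I) (S : Set A)
    (hS : ∀ g ∈ S, f g = g) {x : A} (hx : x ∈ Ideal.span S) :
    f x ∈ Ideal.span S ∧ x - f x ∈ I * Ideal.span S := by
  refine Submodule.span_induction ?_ ?_ ?_ ?_ hx
  · intro g hg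
    refine ⟨by rw [hS g hg]; exact Ideal.subset_span hg, ?_⟩
    rw [hS g hg, sub_self]
    exact zero_mem _
  · exact ⟨by rw [map_zero]; exact zero_mem _, by rw [map_zero, sub_zero]; exact zero_mem _⟩
  · rintro x y hx' hy' ⟨hfx, hdx⟩ ⟨hfy, hdy⟩
    refine ⟨by rw [map_add]; exact add_mem hfx hfy, ?_⟩
    have : x + y - f (x + y) = (x - f x) + (y - f y) := by rw [map_add]; ring
    rw [this]
    exact add_mem hdx hdy
  · rintro a x hx' ⟨hfx, hdx⟩
    refine ⟨by rw [smul_eq_mul, _root_.map_mul]; exact Ideal.mul_mem_left _ _ hfx, ?_⟩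
    have : a • x - f (a • x) = a • (x - f x) + (a - f a) * f x := by
      rw [smul_eq_mul, smul_eq_mul, _root_.map_mul]; ring
    rw [this]
    exact add_mem (Submodule.smul_mem _ _ hdx) (Ideal.mul_mem_mul (hI a) hfx)

lemma prod_fix {ι : Type*} (f : A →+* A) (I : Ideal A) (hI : ∀ a, a - f a ∈ I)
    (s : Finset ι) (G : ι → Set A) (hS : ∀ j ∈ s, ∀ g ∈ G j, f g = g) :
    ∀ x ∈ ∏ j ∈ s, Ideal.span (G j), x - f x ∈ I * ∏ j ∈ s, Ideal.span (G j) := by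
  classical
  induction s using Finset.induction_on with
  | empty =>
    intro x _
    simpa using hI x
  | insert a s' ha ih =>
    intro x hx
    rw [Finset.prod_insert ha] at hx ⊢
    refine Submodule.mul_induction_on hx ?_ ?_
    · intro m hm p hp
      have hmf := span_fix f I hI (G a) (hS a (Finset.mem_insert_self a s')) hm
      have hpf := ih (fun j hj g hg => hS j (Finset.mem_insert_of_mem hj) g hg) p hp
      have hfp : f p ∈ ∏ j ∈ s', Ideal.span (G j) := by
        have : f p = p - (p - f p) := by ring
        rw [this]
        exact sub_mem hp (Ideal.mul_le_right hpf)
      have key : m * p - f (m * p) = (m - f m) * p + f m * (p - f p) := by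
        rw [_root_.map_mul]; ring
      rw [key]
      refine add_mem ?_ ?_
      · have h1 : (m - f m) * p ∈ (I * Ideal.span (G a)) * ∏ j ∈ s', Ideal.span (G j) :=
          Ideal.mul_mem_mul hmf.2 hp
        rwa [mul_assoc] at h1
      · have h2 : f m * (p - f p) ∈ Ideal.span (G a) * (I * ∏ j ∈ s', Ideal.span (G j)) :=
          Ideal.mul_mem_mul hmf.1 hpf
        rwa [mul_left_comm] at h2
    · intro x y hx' hy'
      have : x + y - f (x + y) = (x - f x) + (y - f y) := by rw [map_add]; ring
      rw [this]
      exact add_mem hx' hy'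

end FixLemmas

lemma Jt_eq_span (n : ℕ) (r s : Fin (n + 1)) :
    Jt R B n r s = Ideal.span
      (Ideal.Quotient.mk (Jsq R B n) '' {x | ∃ b : B, x = dd R B n r s b}) := by
  rw [Jt, Jrs, Ideal.map_span]

/-- The hard inclusion, via induction on the set of indices. -/
lemma inter_le_prod (n : ℕ) (x : TT R B n ⧸ Jsq R B n)
    (hx : ∀ i : Fin (n + 1), i ≠ 0 → x ∈ Jt R B n 0 i) :
    ∀ s : Finset (Fin (n + 1)), (∀ j ∈ s, j ≠ 0) → x ∈ ∏ i ∈ s, Jt R B n 0 i := by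
  classical
  intro s
  induction s using Finset.induction_on with
  | empty => intro _; simp
  | @insert i s' ha ih =>
    intro h0
    have hi : i ≠ 0 := h0 i (Finset.mem_insert_self i s')
    have hP : x ∈ ∏ j ∈ s', Jt R B n 0 j :=
      ih (fun j hj => h0 j (Finset.mem_insert_of_mem hj))
    rw [Finset.prod_insert ha]
    -- rewrite the product as product of spans
    have hrw : ∀ j : Fin (n+1), Jt R B n 0 j
        = Ideal.span (Ideal.Quotient.mk (Jsq R B n) '' {y | ∃ b : B, y = dd R B n 0 j b}) :=
      fun j => Jt_eq_span R B n 0 j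
    have hfix : ∀ j ∈ s', ∀ g ∈ (Ideal.Quotient.mk (Jsq R B n) ''
        {y | ∃ b : B, y = dd R B n 0 j b}), phit R B n i hi g = g := by
      rintro j hj g ⟨y, ⟨b, rfl⟩, rfl⟩
      rw [phit_mk, phi_dd]
      have hji : j ≠ i := fun h => ha (h ▸ hj)
      rw [if_neg (Ne.symm hi), if_neg hji]
    have hmain := prod_fix (phit R B n i hi) (Jt R B n 0 i) (phit_sub_mem R B n i hi) s'
      (fun j => Ideal.Quotient.mk (Jsq R B n) '' {y | ∃ b : B, y = dd R B n 0 j b}) hfix x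
    have hP' : x ∈ ∏ j ∈ s', Ideal.span (Ideal.Quotient.mk (Jsq R B n) ''
        {y | ∃ b : B, y = dd R B n 0 j b}) := by
      rwa [Finset.prod_congr rfl (fun j _ => (hrw j).symm)]
    have := hmain hP'
    rw [phit_kills R B n i hi x (hx i hi), sub_zero] at this
    rwa [Finset.prod_congr rfl (fun j _ => (hrw j).symm)] at this

/-- `∏_{i=1}^{n} J̃_{0i} = ⋂_{0 ≤ r < s ≤ n} J̃_{rs}` in `T_n / J^{(2)}_{0n}`. -/
theorem stmt7 (n : ℕ) (hn : 1 ≤ n) :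
    ∏ i ∈ Finset.Ioi (0 : Fin (n + 1)), Jt R B n 0 i
      = ⨅ (r : Fin (n + 1)) (s : Fin (n + 1)) (_ : r < s), Jt R B n r s := by
  classical
  apply le_antisymm
  · -- product ≤ each Jt r s
    refine le_iInf fun r => le_iInf fun s => le_iInf fun hrs => ?_
    rcases eq_or_ne r 0 with rfl | hr0
    · have hs : s ∈ Finset.Ioi (0 : Fin (n+1)) := Finset.mem_Ioi.mpr hrs
      exact le_trans Ideal.prod_le_inf (Finset.inf_le hs)
    · -- 0 < r < s : product ≤ Jt 0 r * Jt 0 s ≤ Jt r s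
      have hr : r ∈ Finset.Ioi (0 : Fin (n+1)) := Finset.mem_Ioi.mpr (Fin.pos_of_ne_zero hr0)
      have hs : s ∈ (Finset.Ioi (0 : Fin (n+1))).erase r := by
        refine Finset.mem_erase.mpr ⟨(ne_of_lt hrs).symm, Finset.mem_Ioi.mpr ?_⟩
        exact lt_trans (Fin.pos_of_ne_zero hr0) hrs
      have step1 : ∏ i ∈ Finset.Ioi (0 : Fin (n + 1)), Jt R B n 0 i
          ≤ Jt R B n 0 r * Jt R B n 0 s := by
        rw [← Finset.mul_prod_erase _ _ hr, ← Finset.mul_prod_erase _ _ hs]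
        rw [← mul_assoc]
        exact Ideal.mul_le_left
      refine le_trans step1 ?_
      -- Jt 0 r * Jt 0 s ≤ Jt r s
      rw [Jt_eq_span R B n 0 r, Jt_eq_span R B n 0 s, Ideal.span_mul_span', Ideal.span_le]
      rintro z ⟨z1, ⟨y1, ⟨b, rfl⟩, rfl⟩, z2, ⟨y2, ⟨b', rfl⟩, rfl⟩, rfl⟩
      have hdd : dd R B n 0 r b * dd R B n 0 s b'
          = dd R B n 0 r b * dd R B n 0 r b' + dd R B n 0 r b * dd R B n r s b' := by
        have : dd R B n 0 s b' = dd R B n 0 r b' + dd R B n r s b' := by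
          simp only [dd]; ring
        rw [this, mul_add]
      have hmem1 : dd R B n 0 r b * dd R B n 0 r b' ∈ Jsq R B n := by
        refine Jrs_sq_le R B n 0 r ?_
        rw [sq]
        exact Ideal.mul_mem_mul (Ideal.subset_span ⟨b, rfl⟩) (Ideal.subset_span ⟨b', rfl⟩)
      have hmem2 : dd R B n 0 r b * dd R B n r s b' ∈ Jrs R B n r s :=
        Ideal.mul_mem_left _ _ (Ideal.subset_span ⟨b', rfl⟩)
      show Ideal.Quotient.mk (Jsq R B n) (dd R B n 0 r b)
          * Ideal.Quotient.mk (Jsq R B n) (dd R B n 0 s b') ∈ Jt R B n r s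
      rw [← RingHom.map_mul, hdd, RingHom.map_add]
      rw [Ideal.Quotient.eq_zero_iff_mem.mpr hmem1, zero_add]
      exact Ideal.mem_map_of_mem _ hmem2
  · -- intersection ≤ product
    intro x hx
    simp only [Submodule.mem_iInf] at hx
    have hx0 : ∀ i : Fin (n + 1), i ≠ 0 → x ∈ Jt R B n 0 i :=
      fun i hi => hx 0 i (Fin.pos_of_ne_zero hi)
    have := inter_le_prod R B n x hx0 (Finset.Ioi 0)
      (fun j hj => Fin.pos_iff_ne_zero.mp (Finset.mem_Ioi.mp hj))
    -- the intersection elements also lie in Jt r s for r>0, but we only need the above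
    exact this


end
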